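/- Let I be an ideal on ω. Then I is meager (as a subset of the Cantor space 2^ω) if and only if there exists a sequence of intervals (I_n : n ∈ ω) of ω with max I_n < min I_{n+1} for all n, such that every S ⊆ ω containing I_k for infinitely many k is I-positive; moreover this holds if and only if there exists g : ω → ω such that every S ⊆ ω containing [n, n+g(n)] for infinitely many n is I-positive. -/
import Mathlib


open Set

/-- `I` is an ideal on `ω = ℕ`: it contains all finite sets, is closed under taking
subsets and finite unions, and `ω ∉ I`. -/
def IsIdealOmega (I : Set (Set ℕ)) : Prop :=
  (∀ F : Set ℕ, F.Finite → F ∈ I) ∧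
  (∀ A B : Set ℕ, A ⊆ B → B ∈ I → A ∈ I) ∧
  (∀ A B : Set ℕ, A ∈ I → B ∈ I → A ∪ B ∈ I) ∧
  (Set.univ : Set ℕ) ∉ I

/-- `I` is meager as a subset of the Cantor space `2^ω`, where `P(ω)` is identified
with `ℕ → Bool` (the product of discrete two-point spaces) via characteristic functions. -/
def IdealMeager (I : Set (Set ℕ)) : Prop :=
  IsMeagre {f : ℕ → Bool | {n : ℕ | f n = true} ∈ I}

open Classical in
/-- The `{0,1}`-valued map `1_{I⁺}`: value `1` exactly on `I`-positive sets
(i.e. sets not in `I`), value `0` on members of `I`. -/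
noncomputable def nuInd (I : Set (Set ℕ)) : Set ℕ → ℝ :=
  fun A => if A ∈ I then 0 else 1

/-- Condition (♦): for every `α ∈ (0,1)` there is `g_α : ω → ω` such that for every
`A ⊆ ω` with `ν(ω \ A) ≤ 1 - α` there is `n_{α,A}` with `A ∩ [n, n + g_α n] ≠ ∅`
for all `n ≥ n_{α,A}`. -/
def CondDiamond (ν : Set ℕ → ℝ) : Prop :=
  ∀ α : ℝ, α ∈ Set.Ioo (0 : ℝ) 1 →
    ∃ g : ℕ → ℕ, ∀ A : Set ℕ, ν (Set.univ \ A) ≤ 1 - α →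
      ∃ N : ℕ, ∀ n : ℕ, N ≤ n → (A ∩ Set.Icc n (n + g n)).Nonempty

/-- `x` is `ν`-maldistributed: `ν {n | x n ∈ U} = 1` for every nonempty open `U`. -/
def Maldistributed {X : Type*} [TopologicalSpace X] (ν : Set ℕ → ℝ) (x : ℕ → X) : Prop :=
  ∀ U : Set X, IsOpen U → U.Nonempty → ν {n : ℕ | x n ∈ U} = 1

/-- `η` is an `I`-cluster point of the sequence `x`: the set `{n | x n ∈ U}` is
`I`-positive for every open neighborhood `U` of `η`. -/
def IdealClusterPt {X : Type*} [TopologicalSpace X] (I : Set (Set ℕ)) (x : ℕ → X)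
    (η : X) : Prop :=
  ∀ U : Set X, IsOpen U → η ∈ U → {n : ℕ | x n ∈ U} ∉ I

lemma cyl_isOpen (f : ℕ → Bool) (m : ℕ) : IsOpen {g : ℕ → Bool | ∀ i < m, g i = f i} := by
  have h : {g : ℕ → Bool | ∀ i < m, g i = f i}
      = Set.pi ↑(Finset.range m) (fun i => {f i}) := by
    ext g
    simp [Set.mem_pi]
  rw [h]
  exact isOpen_set_pi (Finset.finite_toSet _) (fun a _ => isOpen_discrete _)

lemma cyl_basis {U : Set (ℕ → Bool)} (hU : IsOpen U) {f : ℕ → Bool} (hf : f ∈ U) :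
    ∃ m, ∀ g : ℕ → Bool, (∀ i < m, g i = f i) → g ∈ U := by
  obtain ⟨J, u, h1, h2⟩ := isOpen_pi_iff.mp hU f hf
  refine ⟨J.sup id + 1, fun g hg => h2 ?_⟩
  intro a ha
  have hlt : a < J.sup id + 1 := Nat.lt_succ_of_le (Finset.le_sup (f := id) ha)
  rw [hg a hlt]
  exact (h1 a ha).2

lemma dodge {C : Set (ℕ → Bool)} (hCc : IsClosed C) (hCn : IsNowhereDense C)
    (f : ℕ → Bool) (m : ℕ) :
    ∃ (h : ℕ → Bool) (m' : ℕ), m ≤ m' ∧ (∀ i < m, h i = f i) ∧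
      ∀ g : ℕ → Bool, (∀ i < m', g i = h i) → g ∉ C := by
  have hint : interior C = ∅ := hCc.isNowhereDense_iff.mp hCn
  have hns : ¬ ({g : ℕ → Bool | ∀ i < m, g i = f i} ⊆ C) := by
    intro hsub
    have hfi : f ∈ interior C :=
      interior_maximal hsub (cyl_isOpen f m) (by simp)
    rw [hint] at hfi
    exact hfi
  obtain ⟨h, hh, hhC⟩ := not_subset.mp hns
  obtain ⟨m₀, hm₀⟩ := cyl_basis hCc.isOpen_compl hhC
  exact ⟨h, max m m₀, le_max_left _ _, hh, fun g hg =>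
    hm₀ g (fun i hi => hg i (lt_of_lt_of_le hi (le_max_right _ _)))⟩

lemma closed_nwd_union {s t : Set (ℕ → Bool)} (hs : IsClosed s) (hns : IsNowhereDense s)
    (ht : IsClosed t) (hnt : IsNowhereDense t) :
    IsClosed (s ∪ t) ∧ IsNowhereDense (s ∪ t) := by
  refine ⟨hs.union ht, (hs.union ht).isNowhereDense_iff.mpr ?_⟩
  have h1 : interior (s ∪ t) \ s ⊆ interior t := by
    apply interior_maximal
    · intro x hx
      rcases interior_subset hx.1 with h | h
      · exact absurd h hx.2
      · exact h
    · exact isOpen_interior.sdiff hs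
  rw [ht.isNowhereDense_iff.mp hnt] at h1
  have h2 : interior (s ∪ t) ⊆ interior s := by
    apply interior_maximal
    · intro x hx
      by_contra hxs
      exact h1 ⟨hx, hxs⟩
    · exact isOpen_interior
  rw [hs.isNowhereDense_iff.mp hns] at h2
  exact eq_empty_of_subset_empty h2

def talC (e : ℕ → Set (ℕ → Bool)) : ℕ → Set (ℕ → Bool)
  | 0 => closure (e 0)
  | k + 1 => talC e k ∪ closure (e (k + 1))

lemma talC_closed_nwd {e : ℕ → Set (ℕ → Bool)} (he : ∀ j, IsNowhereDense (e j)) (k : ℕ) :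
    IsClosed (talC e k) ∧ IsNowhereDense (talC e k) := by
  induction k with
  | zero => exact ⟨isClosed_closure, (he 0).closure⟩
  | succ k ih =>
      exact closed_nwd_union ih.1 ih.2 isClosed_closure (he (k + 1)).closure

lemma talC_mono (e : ℕ → Set (ℕ → Bool)) : Monotone (talC e) := by
  apply monotone_nat_of_le_succ
  intro k
  exact Set.subset_union_left

lemma talC_mem (e : ℕ → Set (ℕ → Bool)) (j : ℕ) : e j ⊆ talC e j := by
  cases j with
  | zero => exact subset_closure
  | succ j => exact subset_closure.trans Set.subset_union_right

def padFalse {m : ℕ} (s : Fin m → Bool) : ℕ → Bool :=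
  fun i => if h : i < m then s ⟨i, h⟩ else false

def talN (M : ℕ → (ℕ → Bool) → ℕ → ℕ) : ℕ → ℕ
  | 0 => 0
  | k + 1 => talN M k + 1 +
      Finset.univ.sup (fun s : Fin (talN M k) → Bool => M k (padFalse s) (talN M k))

open Classical in
noncomputable def talV (n : ℕ → ℕ) (P : ℕ → (ℕ → Bool) → (ℕ → Bool)) (A : Set ℕ)
    (fX : ℕ → Bool) : ℕ → ℕ → Bool
  | 0 => fX
  | k + 1 => fun m =>
      if n k ≤ m ∧ m < n (k + 1) ∧ k ∈ A then P k (talV n P A fX k) m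
      else talV n P A fX k m

lemma meager_intervals (I : Set (Set ℕ)) (hI : IsIdealOmega I) (hM : IdealMeager I) :
    ∃ a b : ℕ → ℕ, (∀ k : ℕ, a k ≤ b k) ∧ (∀ k : ℕ, b k < a (k + 1)) ∧
      ∀ S : Set ℕ, {k : ℕ | Set.Icc (a k) (b k) ⊆ S}.Infinite → S ∉ I := by
  classical
  set T : Set (ℕ → Bool) := {f : ℕ → Bool | {n : ℕ | f n = true} ∈ I} with hT
  obtain ⟨𝒮, h𝒮nwd, h𝒮c, h𝒮sub⟩ := isMeagre_iff_countable_union_isNowhereDense.mp hM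
  obtain ⟨e, he⟩ : ∃ e : ℕ → Set (ℕ → Bool), insert ∅ 𝒮 = Set.range e :=
    (h𝒮c.insert ∅).exists_eq_range (insert_nonempty _ _)
  have henwd : ∀ j, IsNowhereDense (e j) := by
    intro j
    have : e j ∈ insert ∅ 𝒮 := he ▸ Set.mem_range_self j
    rcases this with h | h
    · rw [h]; exact isNowhereDense_empty
    · exact h𝒮nwd _ h
  set C : ℕ → Set (ℕ → Bool) := talC e with hCdef
  have hC : ∀ k, IsClosed (C k) ∧ IsNowhereDense (C k) := talC_closed_nwd henwd
  have hCmono : Monotone C := talC_mono e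
  have hTsub : T ⊆ ⋃ j, C j := by
    intro f hf
    obtain ⟨s, hs, hfs⟩ := h𝒮sub hf
    have : s ∈ Set.range e := he ▸ Set.mem_insert_of_mem _ hs
    obtain ⟨j, rfl⟩ := this
    exact Set.mem_iUnion.mpr ⟨j, talC_mem e j hfs⟩
  choose H M hM1 hM2 hM3 using fun k (f : ℕ → Bool) m => dodge (hC k).1 (hC k).2 f m
  set n : ℕ → ℕ := talN M with hndef
  have nsucc : ∀ k, n (k + 1) = n k + 1 +
      Finset.univ.sup (fun s : Fin (n k) → Bool => M k (padFalse s) (n k)) := fun k => rfl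
  have nlt : ∀ k, n k < n (k + 1) := by intro k; rw [nsucc]; omega
  have nsm : StrictMono n := strictMono_nat_of_lt_succ nlt
  set P : ℕ → (ℕ → Bool) → (ℕ → Bool) :=
    fun k f => H k (padFalse (fun i : Fin (n k) => f i)) (n k) with hPdef
  have hP1 : ∀ k (f : ℕ → Bool), ∀ i < n k, P k f i = f i := by
    intro k f i hi
    rw [hPdef]
    calc H k (padFalse (fun i : Fin (n k) => f i)) (n k) i
        = padFalse (fun i : Fin (n k) => f i) i := hM2 k _ (n k) i hi
      _ = f i := by simp [padFalse, hi]
  have hP2 : ∀ k (f g : ℕ → Bool), (∀ i < n (k + 1), g i = P k f i) → g ∉ C k := by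
    intro k f g hg
    apply hM3 k (padFalse (fun i : Fin (n k) => f i)) (n k) g
    intro i hi
    apply hg
    have hle : M k (padFalse (fun i : Fin (n k) => f i)) (n k) ≤
        Finset.univ.sup (fun s : Fin (n k) → Bool => M k (padFalse s) (n k)) :=
      Finset.le_sup (f := fun s : Fin (n k) → Bool => M k (padFalse s) (n k))
        (Finset.mem_univ _)
    have := nsucc k
    omega
  refine ⟨n, fun k => n (k + 1) - 1, ?_, ?_, ?_⟩
  · intro k; show n k ≤ n (k + 1) - 1; have := nlt k; omega
  · intro k; show n (k + 1) - 1 < n (k + 1); have := nlt k; omega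
  · intro S hinf hS
    set A : Set ℕ := {k : ℕ | Set.Icc (n k) (n (k + 1) - 1) ⊆ S} with hA
    set fX : ℕ → Bool := fun m => decide (m ∈ S) with hfX
    set V : ℕ → ℕ → Bool := talV n P A fX with hV
    set Y : ℕ → Bool := fun m => V (m + 1) m with hY
    have L1 : ∀ k m, m < n k → V (k + 1) m = V k m := by
      intro k m hm
      show talV n P A fX (k + 1) m = talV n P A fX k m
      simp only [talV]
      rw [if_neg]
      rintro ⟨h1, -⟩
      omega
    have L2 : ∀ d k m, m < n k → V (k + d) m = V k m := by
      intro d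
      induction d with
      | zero => intro k m _; rfl
      | succ d ih =>
          intro k m hm
          have : m < n (k + d) := lt_of_lt_of_le hm (nsm.monotone (Nat.le_add_right k d))
          rw [show k + (d + 1) = (k + d) + 1 by ring, L1 (k + d) m this, ih k m hm]
    have L3 : ∀ j m, m < n j → Y m = V j m := by
      intro j m hm
      show V (m + 1) m = V j m
      rcases Nat.le_total j (m + 1) with h | h
      · obtain ⟨d, hd⟩ := Nat.exists_eq_add_of_le h
        rw [hd]
        exact L2 d j m hm
      · obtain ⟨d, hd⟩ := Nat.exists_eq_add_of_le h
        rw [hd]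
        exact (L2 d (m + 1) m (lt_of_lt_of_le (Nat.lt_succ_self m) nsm.le_apply)).symm
    have L4 : ∀ k ∈ A, Y ∉ C k := by
      intro k hk
      apply hP2 k (V k) Y
      intro i hi
      rcases Nat.lt_or_ge i (n k) with h | h
      · rw [L3 k i h, hP1 k (V k) i h]
      · rw [L3 (k + 1) i hi]
        show talV n P A fX (k + 1) i = P k (talV n P A fX k) i
        simp only [talV]
        rw [if_pos ⟨h, hi, hk⟩]
    have L5 : ∀ k m, V k m = true → m ∈ S := by
      intro k
      induction k with
      | zero =>
          intro m hm
          exact of_decide_eq_true hm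
      | succ k ih =>
          intro m hm
          by_cases hc : n k ≤ m ∧ m < n (k + 1) ∧ k ∈ A
          · have := nlt k
            exact hc.2.2 ⟨hc.1, by omega⟩
          · apply ih m
            have hthis : talV n P A fX (k + 1) m = talV n P A fX k m := by
              simp only [talV]; rw [if_neg hc]
            have hm' : talV n P A fX (k + 1) m = true := hm
            rw [hthis] at hm'
            exact hm'
    have hYS : {m : ℕ | Y m = true} ⊆ S := fun m hm => L5 (m + 1) m hm
    have hYT : Y ∈ T := hI.2.1 _ _ hYS hS
    obtain ⟨k₀, hk₀⟩ := Set.mem_iUnion.mp (hTsub hYT)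
    have hAninf : ¬ A ⊆ Set.Iic k₀ := fun h => hinf (Set.Finite.subset (Set.finite_Iic k₀) h)
    obtain ⟨k, hkA, hkgt⟩ := not_subset.mp hAninf
    exact L4 k hkA (hCmono (le_of_not_ge hkgt) hk₀)

lemma g_to_meager (I : Set (Set ℕ)) (g : ℕ → ℕ)
    (hg : ∀ S : Set ℕ, {n : ℕ | Set.Icc n (n + g n) ⊆ S}.Infinite → S ∉ I) :
    IdealMeager I := by
  classical
  unfold IdealMeager
  set D : ℕ → Set (ℕ → Bool) :=
    fun N => {f : ℕ → Bool | ∀ n, N ≤ n → ∃ m, n ≤ m ∧ m ≤ n + g n ∧ f m = false} with hD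
  have hDclosed : ∀ N, IsClosed (D N) := by
    intro N
    have : D N = ⋂ (n : ℕ) (_ : N ≤ n),
        ⋃ m ∈ Finset.Icc n (n + g n), {f : ℕ → Bool | f m = false} := by
      ext f
      simp only [hD, Set.mem_setOf_eq, Set.mem_iInter, Set.mem_iUnion, Finset.mem_Icc,
        exists_prop]
      constructor
      · intro h n hn
        obtain ⟨m, h1, h2, h3⟩ := h n hn
        exact ⟨m, ⟨h1, h2⟩, h3⟩
      · intro h n hn
        obtain ⟨m, ⟨h1, h2⟩, h3⟩ := h n hn
        exact ⟨m, h1, h2, h3⟩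
    rw [this]
    refine isClosed_iInter fun n => isClosed_iInter fun _ => ?_
    refine Set.Finite.isClosed_biUnion (Finset.finite_toSet _) fun m _ => ?_
    have : {f : ℕ → Bool | f m = false} = (fun f : ℕ → Bool => f m) ⁻¹' {false} := rfl
    rw [this]
    exact (isClosed_discrete _).preimage (continuous_apply m)
  have hDnwd : ∀ N, IsNowhereDense (D N) := by
    intro N
    rw [(hDclosed N).isNowhereDense_iff]
    rw [Set.eq_empty_iff_forall_notMem]
    intro f hf
    obtain ⟨m₀, hm₀⟩ := cyl_basis isOpen_interior hf
    set f' : ℕ → Bool := fun i => if i < m₀ then f i else true with hf'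
    have hf'D : f' ∈ D N := interior_subset (hm₀ f' (fun i hi => by simp [hf', hi]))
    obtain ⟨m, hm1, -, hm3⟩ := hf'D (max N m₀) (le_max_left _ _)
    have : f' m = true := by
      simp only [hf', if_neg (by omega : ¬ m < m₀)]
    rw [this] at hm3
    exact Bool.noConfusion hm3
  apply isMeagre_iff_countable_union_isNowhereDense.mpr
  refine ⟨Set.range D, ?_, Set.countable_range D, ?_⟩
  · rintro t ⟨N, rfl⟩; exact hDnwd N
  · intro f hf
    set S : Set ℕ := {n : ℕ | f n = true} with hS
    have hfin : {n : ℕ | Set.Icc n (n + g n) ⊆ S}.Finite := by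
      by_contra h
      exact hg S h hf
    obtain ⟨N, hN⟩ := (Set.Finite.bddAbove hfin)
    refine ⟨D (N + 1), ⟨N + 1, rfl⟩, ?_⟩
    intro n hn
    have hns : ¬ Set.Icc n (n + g n) ⊆ S := by
      intro hsub
      have := hN hsub
      omega
    obtain ⟨m, hm, hmS⟩ := not_subset.mp hns
    rw [Set.mem_Icc] at hm
    exact ⟨m, hm.1, hm.2, by simpa [hS] using hmS⟩

lemma intervals_to_g (I : Set (Set ℕ)) (a b : ℕ → ℕ) (hab : ∀ k, a k ≤ b k)
    (hba : ∀ k, b k < a (k + 1))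
    (hpos : ∀ S : Set ℕ, {k : ℕ | Set.Icc (a k) (b k) ⊆ S}.Infinite → S ∉ I) :
    ∃ g : ℕ → ℕ, ∀ S : Set ℕ, {n : ℕ | Set.Icc n (n + g n) ⊆ S}.Infinite → S ∉ I := by
  have hsm : StrictMono a := strictMono_nat_of_lt_succ (fun k => lt_of_le_of_lt (hab k) (hba k))
  refine ⟨fun n => b n - n, fun S hinf => hpos S (hinf.mono ?_)⟩
  intro n hn
  simp only [Set.mem_setOf_eq] at hn ⊢
  intro x hx
  apply hn
  rw [Set.mem_Icc] at hx ⊢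
  have h1 : n ≤ a n := hsm.le_apply
  have h2 := hab n
  constructor <;> omega

/-- **Talagrand's characterization.** An ideal `I` on `ω` is meager iff
there is a sequence of intervals `I_k = [a k, b k]` with `max I_k < min I_{k+1}` such
that every `S ⊆ ω` containing `I_k` for infinitely many `k` is `I`-positive; and this
holds iff there is `g : ω → ω` such that every `S ⊆ ω` containing `[n, n + g n]` for
infinitely many `n` is `I`-positive. -/
theorem stmt_18 (I : Set (Set ℕ)) (hI : IsIdealOmega I) :
    (IdealMeager I ↔
      ∃ a b : ℕ → ℕ, (∀ k : ℕ, a k ≤ b k) ∧ (∀ k : ℕ, b k < a (k + 1)) ∧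
        ∀ S : Set ℕ, {k : ℕ | Set.Icc (a k) (b k) ⊆ S}.Infinite → S ∉ I) ∧
    (IdealMeager I ↔
      ∃ g : ℕ → ℕ, ∀ S : Set ℕ, {n : ℕ | Set.Icc n (n + g n) ⊆ S}.Infinite → S ∉ I) := by
  have h1 := meager_intervals I hI
  have h2 : (∃ a b : ℕ → ℕ, (∀ k : ℕ, a k ≤ b k) ∧ (∀ k : ℕ, b k < a (k + 1)) ∧
        ∀ S : Set ℕ, {k : ℕ | Set.Icc (a k) (b k) ⊆ S}.Infinite → S ∉ I) →
      ∃ g : ℕ → ℕ, ∀ S : Set ℕ, {n : ℕ | Set.Icc n (n + g n) ⊆ S}.Infinite → S ∉ I := by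
    rintro ⟨a, b, hab, hba, hpos⟩
    exact intervals_to_g I a b hab hba hpos
  have h3 : (∃ g : ℕ → ℕ, ∀ S : Set ℕ, {n : ℕ | Set.Icc n (n + g n) ⊆ S}.Infinite → S ∉ I) →
      IdealMeager I := by
    rintro ⟨g, hg⟩
    exact g_to_meager I g hg
  exact ⟨⟨fun h => h1 h, fun h => h3 (h2 h)⟩, ⟨fun h => h2 (h1 h), h3⟩⟩
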